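/- Bloch eigenfunctions at the domain wall: Let Γ₀(x) = [[0, e^{−2ix}],[e^{2ix}, 0]]. Let λ, k ∈ ℂ satisfy k² = 4(1 + λ²), and define ψ: ℝ×ℝ → ℂ² by ψ(t,x) = e^{−iλkt} · ( 2λ e^{i(k−2)x/2}, (k−2) e^{i(k+2)x/2} ). Then ψ solves both equations of the Lax pair at (Γ₀, λ): ∂_x ψ = iλ Γ₀ ψ and ∂_t ψ = −(λ/2)(4iλ Γ₀ + [Γ₀, ∂_x Γ₀]) ψ. -/

import Mathlib

open Matrix

noncomputable section

/-- The matrix of the domain wall `m = (cos 2x, sin 2x, 0)`: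
`Γ₀(x) = [[0, e^{−2ix}],[e^{2ix}, 0]]`. -/
def Gamma0 (x : ℝ) : Matrix (Fin 2) (Fin 2) ℂ :=
  !![0, Complex.exp (-(2 * Complex.I * (x : ℂ)));
     Complex.exp (2 * Complex.I * (x : ℂ)), 0]

/-- Entrywise spatial derivative of `Γ₀`. -/
def Gamma0x (x : ℝ) : Matrix (Fin 2) (Fin 2) ℂ :=
  Matrix.of fun i j => deriv (fun y => Gamma0 y i j) x

/-- The Bloch eigenfunction
`ψ(t,x) = e^{−iλkt} ( 2λ e^{i(k−2)x/2}, (k−2) e^{i(k+2)x/2} )`. -/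
def blochPsi (lam k : ℂ) (t x : ℝ) : Fin 2 → ℂ :=
  Complex.exp (-(Complex.I * lam * k * (t : ℂ))) •
    ![2 * lam * Complex.exp (Complex.I * (k - 2) * (x : ℂ) / 2),
      (k - 2) * Complex.exp (Complex.I * (k + 2) * (x : ℂ) / 2)]

/-!
Separating variables, `ψ(t, x) = e^{-iλkt} v(x)` where `v` is `blochProfile`. The matrix `Γ₀(x)`
swaps the two Fourier modes `e^{i(k ∓ 2)x/2}` of `v`, so `∂_x v = iλΓ₀v` comes down to the
dispersion relation `(k - 2)(k + 2)/4 = λ²`. The commutator `[Γ₀, ∂_xΓ₀] = 4iσ₃` is constant, so the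
time equation reads `-iλk v = -2iλ (λΓ₀ + σ₃) v`, i.e. `v` is an eigenvector of `λΓ₀ + σ₃` with
eigenvalue `k/2`, which is once more the dispersion relation.
-/

open Complex

lemma hasDerivAt_cexp_mul_ofReal (c : ℂ) (x : ℝ) :
    HasDerivAt (fun y : ℝ => exp (c * y)) (c * exp (c * x)) x := by
  simpa [mul_comm c] using ((ofRealCLM.hasDerivAt (x := x)).const_mul c).cexp

def sigma3 : Matrix (Fin 2) (Fin 2) ℂ := !![1, 0; 0, -1]

lemma Gamma0x_eq (x : ℝ) :
    Gamma0x x = !![0, -(2 * I) * exp (-(2 * I * x)); 2 * I * exp (2 * I * x), 0] := by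
  have h := (hasDerivAt_cexp_mul_ofReal (-(2 * I)) x).deriv
  simp only [neg_mul] at h
  ext i j
  fin_cases i <;> fin_cases j <;>
    simp [Gamma0x, Gamma0, h, (hasDerivAt_cexp_mul_ofReal _ x).deriv]

lemma Gamma0_commutator (x : ℝ) :
    Gamma0 x * Gamma0x x - Gamma0x x * Gamma0 x = (4 * I) • sigma3 := by
  have h : exp (-(2 * I * x)) * exp (2 * I * x) = 1 := by rw [← exp_add]; simp
  rw [Gamma0x_eq]
  ext i j
  fin_cases i <;> fin_cases j <;> simp [Gamma0, sigma3]
  · linear_combination (4 * I) * h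
  · linear_combination (-(4 * I)) * h

def blochProfile (lam k : ℂ) (x : ℝ) : Fin 2 → ℂ :=
  ![2 * lam * exp (I * (k - 2) * x / 2), (k - 2) * exp (I * (k + 2) * x / 2)]

lemma Gamma0_mulVec_blochProfile (lam k : ℂ) (x : ℝ) :
    Gamma0 x *ᵥ blochProfile lam k x =
      ![(k - 2) * exp (I * (k - 2) * x / 2), 2 * lam * exp (I * (k + 2) * x / 2)] := by
  have h₀ : exp (I * (k + 2) * x / 2) * exp (-(2 * I * x)) = exp (I * (k - 2) * x / 2) := by
    rw [← exp_add]; ring_nf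
  have h₁ : exp (I * (k - 2) * x / 2) * exp (2 * I * x) = exp (I * (k + 2) * x / 2) := by
    rw [← exp_add]; ring_nf
  rw [mulVec_fin_two]
  simp only [Gamma0, blochProfile, of_apply, cons_val', cons_val_zero, cons_val_one,
    cons_val_fin_one, zero_mul, zero_add, add_zero, vecCons_inj, and_true]
  exact ⟨by linear_combination (k - 2) * h₀, by linear_combination (2 * lam) * h₁⟩

section

variable {lam k : ℂ}

lemma hasDerivAt_blochProfile (hk : k ^ 2 = 4 * (1 + lam ^ 2)) (x : ℝ) :
    HasDerivAt (blochProfile lam k) (((I * lam) • Gamma0 x) *ᵥ blochProfile lam k x) x := by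
  have h₀ := (hasDerivAt_cexp_mul_ofReal (I * (k - 2) / 2) x).const_mul (2 * lam)
  have h₁ := (hasDerivAt_cexp_mul_ofReal (I * (k + 2) / 2) x).const_mul (k - 2)
  simp only [← mul_div_right_comm] at h₀ h₁
  rw [hasDerivAt_pi, smul_mulVec, Gamma0_mulVec_blochProfile]
  refine Fin.forall_fin_two.2 ⟨h₀.congr_deriv ?_, h₁.congr_deriv ?_⟩
  · simp only [Pi.smul_apply, cons_val_zero, smul_eq_mul]
    ring
  · simp only [Pi.smul_apply, cons_val_one, cons_val_fin_one, smul_eq_mul]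
    linear_combination (I * exp (I * (k + 2) * x / 2) / 2) * hk

lemma smul_Gamma0_add_sigma3_mulVec_blochProfile (hk : k ^ 2 = 4 * (1 + lam ^ 2)) (x : ℝ) :
    (lam • Gamma0 x + sigma3) *ᵥ blochProfile lam k x = (k / 2) • blochProfile lam k x := by
  rw [add_mulVec, smul_mulVec, Gamma0_mulVec_blochProfile, mulVec_fin_two]
  simp only [sigma3, blochProfile, smul_cons, smul_eq_mul, smul_empty, of_apply, cons_val',
    cons_val_zero, cons_val_one, cons_val_fin_one, one_mul, zero_mul, neg_mul, add_zero, zero_add,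
    add_cons, head_cons, tail_cons, empty_add_empty, vecCons_inj, and_true]
  exact ⟨by ring, by linear_combination (-exp (I * (k + 2) * x / 2) / 2) * hk⟩

end

/-- **Bloch eigenfunctions at the domain wall.**
If `k² = 4(1 + λ²)` then `ψ = blochPsi lam k` solves both equations of the Lax pair at
`(Γ₀, λ)`: `∂_x ψ = iλΓ₀ψ` and `∂_t ψ = −(λ/2)(4iλΓ₀ + [Γ₀, ∂_xΓ₀])ψ`. -/
theorem domain_wall_bloch_eigenfunctions
    (lam k : ℂ) (hk : k ^ 2 = 4 * (1 + lam ^ 2)) :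
    (∀ t x : ℝ, HasDerivAt (fun y => blochPsi lam k t y)
      (((Complex.I * lam) • Gamma0 x).mulVec (blochPsi lam k t x)) x) ∧
    (∀ t x : ℝ, HasDerivAt (fun s => blochPsi lam k s x)
      (((-(lam / 2)) • ((4 * Complex.I * lam) • Gamma0 x +
        (Gamma0 x * Gamma0x x - Gamma0x x * Gamma0 x))).mulVec (blochPsi lam k t x)) t) := by
  have hψ (t x : ℝ) : blochPsi lam k t x = exp (-(I * lam * k) * t) • blochProfile lam k x := by
    simp only [neg_mul]; rfl
  refine ⟨fun t x => ?_, fun t x => ?_⟩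
  · simp only [hψ, mulVec_smul]
    exact (hasDerivAt_blochProfile hk x).const_smul (exp (-(I * lam * k) * t))
  · have hL : (4 * I * lam) • Gamma0 x + (Gamma0 x * Gamma0x x - Gamma0x x * Gamma0 x) =
        (4 * I) • (lam • Gamma0 x + sigma3) := by
      rw [Gamma0_commutator, smul_add, smul_smul]
    simp only [hL, hψ, mulVec_smul, smul_mulVec, smul_Gamma0_add_sigma3_mulVec_blochProfile hk,
      smul_smul]
    refine ((hasDerivAt_cexp_mul_ofReal _ t).smul_const (blochProfile lam k x)).congr_deriv ?_
    congr 1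
    ring
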